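/- Let R be a coherent commutative ring, 𝔗 a torsion theory over R, 𝔞 a finitely generated ideal of R, and M an R-module with M ∈ 𝔗. Then Ext^i_R(R/𝔞, M) ∈ 𝔗 for all i ≥ 0. -/

import Mathlib

open CategoryTheory

universe u

noncomputable section

/-- A torsion theory over `R`: a class of `R`-modules closed under isomorphism, submodules,
quotient modules, extensions, and directed colimits (formulated as closure under directed
unions of submodules). -/
structure IsTorsionTheory (R : Type u) [CommRing R] (T : Set (ModuleCat.{u} R)) : Prop where
  mem_of_iso : ∀ {N N' : ModuleCat.{u} R}, (N ≅ N') → N ∈ T → N' ∈ T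
  submodule_mem : ∀ {N : ModuleCat.{u} R}, N ∈ T → ∀ S : Submodule R N,
    ModuleCat.of R S ∈ T
  quotient_mem : ∀ {N : ModuleCat.{u} R}, N ∈ T → ∀ S : Submodule R N,
    ModuleCat.of R (N ⧸ S) ∈ T
  ext_mem : ∀ {N : ModuleCat.{u} R} (S : Submodule R N),
    ModuleCat.of R S ∈ T → ModuleCat.of R (N ⧸ S) ∈ T → N ∈ T
  directed_mem : ∀ {N : ModuleCat.{u} R} {ι : Type u} [Nonempty ι] (S : ι → Submodule R N),
    Directed (· ≤ ·) S → (∀ i, ModuleCat.of R (S i) ∈ T) → iSup S = ⊤ → N ∈ T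

variable {R : Type u} [CommRing R]

/-- A commutative ring is coherent if every finitely generated ideal is finitely presented. -/
def IsCoherentRing (R : Type u) [CommRing R] : Prop :=
  ∀ I : Ideal R, I.FG → Module.FinitePresentation R I

/-!
Over a coherent ring every finitely generated submodule of a finite projective module is finitely
presented, so choosing generators of minimal cardinality for each successive kernel yields a
projective resolution of the finitely presented module `R ⧸ 𝔞` by finite free modules. Computed
with it, `Ext^i(R ⧸ 𝔞, M)` is a subquotient of `Hom(R^k, M) ≅ M^k`, and a torsion theory contains
`M^k` (closure under extensions) and all its subquotients.
-/

section PseudoCoherent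

variable {R : Type*} [Ring R] {M N : Type*} [AddCommGroup M] [Module R M]
  [AddCommGroup N] [Module R N]

/-- Bourbaki's pseudo-coherence; `R` is (left) coherent iff `IsPseudoCoherent R R`. -/
def Module.IsPseudoCoherent (R M : Type*) [Ring R] [AddCommGroup M] [Module R M] : Prop :=
  ∀ N : Submodule R M, N.FG → Module.FinitePresentation R N

namespace Module.IsPseudoCoherent

theorem of_injective (h : IsPseudoCoherent R N) (f : M →ₗ[R] N) (hf : Function.Injective f) :
    IsPseudoCoherent R M := fun L hL ↦
  have := h _ (hL.map f)
  .of_equiv (L.equivMapOfInjective f hf).symm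

theorem fg_ker (h : IsPseudoCoherent R N) [Module.Finite R M] (f : M →ₗ[R] N) :
    (LinearMap.ker f).FG := by
  have := h _ (Submodule.fg_range f)
  rw [← LinearMap.ker_rangeRestrict]
  exact Module.FinitePresentation.fg_ker _ f.surjective_rangeRestrict

theorem prod (hM : IsPseudoCoherent R M) (hN : IsPseudoCoherent R N) :
    IsPseudoCoherent R (M × N) := by
  intro L hL
  have : Module.Finite R L := .of_fg hL
  let p : L →ₗ[R] N := LinearMap.snd R M N ∘ₗ L.subtype
  have := hN _ (Submodule.fg_range p)
  have : Module.Finite R (LinearMap.ker p) := .of_fg (hN.fg_ker p)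
  -- on `ker p` the second coordinate vanishes, so the first one is injective
  let q : LinearMap.ker p →ₗ[R] M := LinearMap.fst R M N ∘ₗ L.subtype ∘ₗ (LinearMap.ker p).subtype
  have hq : Function.Injective q := by
    rintro ⟨⟨⟨x₁, x₂⟩, hx⟩, hx₂ : x₂ = 0⟩ ⟨⟨⟨y₁, y₂⟩, hy⟩, hy₂ : y₂ = 0⟩ (h : x₁ = y₁)
    subst hx₂ hy₂ h
    rfl
  have := hM _ (Submodule.fg_range q)
  have : Module.FinitePresentation R (LinearMap.ker p.rangeRestrict) := by
    rw [LinearMap.ker_rangeRestrict]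
    exact .of_equiv (N := LinearMap.ker p) (LinearEquiv.ofInjective q hq).symm
  exact Module.finitePresentation_of_ker p.rangeRestrict p.surjective_rangeRestrict

theorem pi {ι : Type*} [Finite ι] (h : IsPseudoCoherent R R) : IsPseudoCoherent R (ι → R) :=
  Module.pi_induction' R (fun N _ _ ↦ IsPseudoCoherent R N) (fun N _ _ ↦ IsPseudoCoherent R N)
    (fun e hN ↦ hN.of_injective e.symm.toLinearMap e.symm.injective)
    (fun e hN ↦ hN.of_injective e.symm.toLinearMap e.symm.injective)
    (fun _ _ ↦ inferInstance) (fun hN hN' ↦ hN.prod hN') (fun _ ↦ R) fun _ ↦ h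

theorem of_projective (h : IsPseudoCoherent R R) [Module.Projective R M] [Module.Finite R M] :
    IsPseudoCoherent R M :=
  have ⟨_, _, s, _, hs, _⟩ := Module.Finite.exists_comp_eq_id_of_projective R M
  (pi h).of_injective s hs

end Module.IsPseudoCoherent

end PseudoCoherent

namespace Submodule

variable {R M : Type*} [Semiring R] [AddCommMonoid M] [Module R M]

theorem range_linearCombination_generators (L : Submodule R M) :
    LinearMap.range (Finsupp.linearCombination R ((↑) : L.generators → M)) = L := by
  rw [Finsupp.range_linearCombination, Subtype.range_val, span_generators]

theorem FG.finite_finsupp_generators {L : Submodule R M} (h : L.FG) :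
    Module.Finite R (L.generators →₀ R) :=
  have := h.finite_generators.to_subtype
  inferInstance

end Submodule

namespace ChainComplex

variable {V : Type*} [Category V] [Abelian V] (X₀ X₁ : V) (d₀ : X₁ ⟶ X₀)
  (succ' : ∀ {X₀ X₁ : V} (f : X₁ ⟶ X₀), Σ' (X₂ : V) (d : X₂ ⟶ X₁), d ≫ f = 0)

theorem mk'_exactAt_succ
    (exact_succ' : ∀ {X₀ X₁ : V} (f : X₁ ⟶ X₀), (ShortComplex.mk _ _ (succ' f).2.2).Exact)
    (n : ℕ) : (mk' X₀ X₁ d₀ succ').ExactAt (n + 1) := by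
  rw [HomologicalComplex.exactAt_iff' _ (n + 2) (n + 1) n (by simp) (by simp)]
  refine (ShortComplex.exact_iff_of_iso ?_).2 (exact_succ' ((mk' X₀ X₁ d₀ succ').d (n + 1) n))
  refine ShortComplex.isoMk (mk'XIso X₀ X₁ d₀ succ' n) (Iso.refl _) (Iso.refl _) ?_ ?_
  · exact (mk'_d X₀ X₁ d₀ succ' n).symm.trans (Category.comp_id _).symm
  · exact (Category.id_comp _).trans (Category.comp_id _).symm

end ChainComplex

namespace ModuleCat

variable {R : Type u} [Ring R]

/-- The free module on `generators (ker f)` over `ker f`, in the shape `ChainComplex.mk'` wants. -/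
def kerFreeCover {X Y : ModuleCat.{u} R} (f : X ⟶ Y) :
    Σ' (Z : ModuleCat.{u} R) (d : Z ⟶ X), d ≫ f = 0 :=
  ⟨of R ((LinearMap.ker f.hom).generators →₀ R), ofHom (Finsupp.linearCombination R Subtype.val),
    hom_ext (LinearMap.range_le_ker_iff.mp (Submodule.range_linearCombination_generators _).le)⟩

theorem exact_kerFreeCover {X Y : ModuleCat.{u} R} (f : X ⟶ Y) :
    (ShortComplex.mk _ _ (kerFreeCover f).2.2).Exact := by
  rw [ShortComplex.moduleCat_exact_iff_range_eq_ker]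
  exact Submodule.range_linearCombination_generators _

instance {X Y : ModuleCat.{u} R} (f : X ⟶ Y) : Projective (kerFreeCover f).1 :=
  projective_of_free Finsupp.basisSingleOne

variable (N : ModuleCat.{u} R)

def topFreeCover : of R ((⊤ : Submodule R N).generators →₀ R) ⟶ N :=
  ofHom (Finsupp.linearCombination R Subtype.val)

theorem surjective_topFreeCover : Function.Surjective (topFreeCover N) := by
  rw [← LinearMap.range_eq_top]
  exact Submodule.range_linearCombination_generators _

abbrev freeResolutionComplex : ChainComplex (ModuleCat.{u} R) ℕ :=
  ChainComplex.mk' _ _ (kerFreeCover (topFreeCover N)).2.1 kerFreeCover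

theorem freeResolutionComplex_d_one_zero :
    (freeResolutionComplex N).d 1 0 = (kerFreeCover (topFreeCover N)).2.1 :=
  ChainComplex.mk'_d_1_0 _ _ _ _

instance (n : ℕ) : Projective ((freeResolutionComplex N).X n) := by
  match n with
  | 0 => exact projective_of_free Finsupp.basisSingleOne
  | 1 => exact inferInstanceAs (Projective (kerFreeCover _).1)
  | n + 2 => exact Projective.of_iso (ChainComplex.mk'XIso _ _ _ _ n).symm inferInstance

def freeResolution : ProjectiveResolution N where
  complex := freeResolutionComplex N
  π := (ChainComplex.toSingle₀Equiv _ _).symm ⟨topFreeCover N, by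
    rw [freeResolutionComplex_d_one_zero]; exact (kerFreeCover _).2.2⟩
  quasiIso := ⟨fun n => by
    cases n
    · rw [ChainComplex.quasiIsoAt₀_iff, ShortComplex.quasiIso_iff_of_zeros']
      · refine (ShortComplex.exact_and_epi_g_iff_of_iso ?_).2
          ⟨exact_kerFreeCover (topFreeCover N),
            (epi_iff_surjective _).mpr (surjective_topFreeCover N)⟩
        exact ShortComplex.isoMk (Iso.refl _) (Iso.refl _) (Iso.refl _)
          ((Category.id_comp _).trans ((freeResolutionComplex_d_one_zero N).symm.trans
            (Category.comp_id _).symm))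
          ((Category.id_comp _).trans (Category.comp_id _).symm)
      all_goals rfl
    · rw [quasiIsoAt_iff_exactAt']
      · exact ChainComplex.mk'_exactAt_succ _ _ _ _ exact_kerFreeCover _
      · apply ChainComplex.exactAt_succ_single_obj⟩

variable [Module.FinitePresentation R N]

theorem finite_freeResolutionComplex_X (hR : Module.IsPseudoCoherent R R) (n : ℕ) :
    Module.Finite R ((freeResolutionComplex N).X n) ∧
      Module.Finite R ((freeResolutionComplex N).X (n + 1)) := by
  induction n with
  | zero =>
    have : Module.Finite R (of R ((⊤ : Submodule R N).generators →₀ R)) :=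
      Module.Finite.fg_top.finite_finsupp_generators
    exact ⟨this,
      (Module.FinitePresentation.fg_ker _ (surjective_topFreeCover N)).finite_finsupp_generators⟩
  | succ n ih =>
    obtain ⟨_, _⟩ := ih
    have : Module.Finite R (kerFreeCover ((freeResolutionComplex N).d (n + 1) n)).1 :=
      ((Module.IsPseudoCoherent.of_projective hR).fg_ker
        ((freeResolutionComplex N).d (n + 1) n).hom).finite_finsupp_generators
    exact ⟨inferInstance, .equiv (ChainComplex.mk'XIso _ _ _ _ n).toLinearEquiv.symm⟩

theorem finite_freeResolution_X (hR : Module.IsPseudoCoherent R R) (n : ℕ) :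
    Module.Finite R ((freeResolution N).complex.X n) :=
  (finite_freeResolutionComplex_X N hR n).1

end ModuleCat

namespace IsTorsionTheory

variable {T : Set (ModuleCat.{u} R)} {M N P : Type u} [AddCommGroup M] [Module R M]
  [AddCommGroup N] [Module R N] [AddCommGroup P] [Module R P]

theorem mem_of_linearEquiv (hT : IsTorsionTheory R T) (e : M ≃ₗ[R] N)
    (hM : ModuleCat.of R M ∈ T) : ModuleCat.of R N ∈ T :=
  hT.mem_of_iso e.toModuleIso hM

theorem mem_of_injective (hT : IsTorsionTheory R T) (f : N →ₗ[R] M) (hf : Function.Injective f)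
    (hM : ModuleCat.of R M ∈ T) : ModuleCat.of R N ∈ T :=
  hT.mem_of_linearEquiv (LinearEquiv.ofInjective f hf).symm
    (hT.submodule_mem (N := ModuleCat.of R M) hM _)

theorem mem_of_exact (hT : IsTorsionTheory R T) (f : M →ₗ[R] N) (g : N →ₗ[R] P)
    (hf : Function.Injective f) (hg : Function.Surjective g) (hfg : Function.Exact f g)
    (hM : ModuleCat.of R M ∈ T) (hP : ModuleCat.of R P ∈ T) : ModuleCat.of R N ∈ T :=
  hT.ext_mem (N := ModuleCat.of R N) (LinearMap.range f)
    (hT.mem_of_linearEquiv (LinearEquiv.ofInjective f hf) hM)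
    (hT.mem_of_linearEquiv (hfg.linearEquivOfSurjective hg).symm hP)

theorem prod_mem (hT : IsTorsionTheory R T) (hM : ModuleCat.of R M ∈ T)
    (hN : ModuleCat.of R N ∈ T) : ModuleCat.of R (M × N) ∈ T :=
  hT.mem_of_exact _ _ LinearMap.inl_injective LinearMap.snd_surjective
    Function.Exact.inl_snd hM hN

theorem pi_mem (hT : IsTorsionTheory R T) {ι : Type} [Finite ι] (hM : ModuleCat.of R M ∈ T) :
    ModuleCat.of R (ι → M) ∈ T :=
  Module.pi_induction' R (fun N _ _ ↦ ModuleCat.of R N ∈ T) (fun N _ _ ↦ ModuleCat.of R N ∈ T)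
    (fun e ↦ hT.mem_of_linearEquiv e) (fun e ↦ hT.mem_of_linearEquiv e)
    (hT.mem_of_injective (0 : PUnit.{u + 1} →ₗ[R] M) (fun _ _ _ ↦ Subsingleton.elim _ _) hM)
    (fun h h' ↦ hT.prod_mem h h') (fun _ ↦ M) fun _ ↦ hM

theorem linearMap_mem (hT : IsTorsionTheory R T) [Module.Finite R P]
    (hM : ModuleCat.of R M ∈ T) : ModuleCat.of R (P →ₗ[R] M) ∈ T := by
  obtain ⟨n, f, hf⟩ := Module.Finite.exists_fin' R P
  exact hT.mem_of_injective (LinearMap.lcomp R M f) (LinearMap.lcomp_injective_of_surjective f hf)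
    (hT.mem_of_linearEquiv (LinearEquiv.piRing R M (Fin n) R).symm (hT.pi_mem hM))

theorem homology_mem (hT : IsTorsionTheory R T) (S : ShortComplex (ModuleCat.{u} R))
    (hS : S.X₂ ∈ T) : S.homology ∈ T :=
  hT.mem_of_iso S.moduleCatHomologyIso.symm
    (hT.quotient_mem (hT.submodule_mem hS (LinearMap.ker S.g.hom)) _)

end IsTorsionTheory

/-- **Theorem.** Let `R` be a coherent commutative ring, `𝔗` a torsion theory, `𝔞` a
finitely generated ideal of `R` and `M ∈ 𝔗`. Then `Ext^i_R(R/𝔞, M) ∈ 𝔗` for all `i ≥ 0`. -/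
theorem ext_mem_of_mem_of_isCoherentRing (hR : IsCoherentRing R)
    (T : Set (ModuleCat.{u} R)) (hT : IsTorsionTheory R T)
    (a : Ideal R) (ha : a.FG) (M : Type u) [AddCommGroup M] [Module R M]
    (hM : ModuleCat.of R M ∈ T) :
    ∀ i : ℕ, ((Ext R (ModuleCat.{u} R) i).obj (Opposite.op (ModuleCat.of R (R ⧸ a)))).obj
      (ModuleCat.of R M) ∈ T := by
  intro i
  have : Module.FinitePresentation R (R ⧸ a) :=
    Module.finitePresentation_of_surjective a.mkQ a.mkQ_surjective (by rwa [Submodule.ker_mkQ])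
  let P := ModuleCat.freeResolution (ModuleCat.of R (R ⧸ a))
  have : Module.Finite R (P.complex.X i) := ModuleCat.finite_freeResolution_X _ hR i
  let K := P.complex.linearYonedaObj R (ModuleCat.of R M)
  have hK : K.X i ∈ T := hT.mem_of_linearEquiv ModuleCat.homLinearEquiv.symm (hT.linearMap_mem hM)
  exact hT.mem_of_iso (P.isoExt i _).symm (hT.homology_mem (K.sc i) hK)
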